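/- arXiv:1602.05441 — 3 statements merged into one kernel-verified Lean document; each statement's English description precedes it below -/
import Mathlib

section
/- Let H be a Hopf algebra over a field k with bijective antipode, and let A, B be left H-modules. The flip map x ⊗ y ↦ y ⊗ x restricts to a k-linear isomorphism between the space of H-invariants (A ⊗ B)^H (with diagonal action) and the space of H-invariants (B^# ⊗ A)^H, where B^# is B with the H-action twisted by S^{-2}, i.e. h ·_{#} b = S^{-2}(h)·b, and B^# ⊗ A carries the diagonal action of these twisted/untwisted actions. -/
open TensorProduct

noncomputable section

variable (k : Type) [Field k]
variable (H : Type) [Ring H] [HopfAlgebra k H]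

/-- The action of `H` on a left `H`-module `M`, as a `k`-bilinear map. -/
def smulL (M : Type) [AddCommGroup M] [Module k M] [Module H M]
    [IsScalarTower k H M] [SMulCommClass k H M] : H →ₗ[k] M →ₗ[k] M where
  toFun h :=
    { toFun := fun m => h • m
      map_add' := fun _ _ => smul_add _ _ _
      map_smul' := fun c m => (smul_comm c h m).symm }
  map_add' := fun a b => LinearMap.ext fun m => add_smul a b m
  map_smul' := fun c a => LinearMap.ext fun m => smul_assoc c a m

/-- The action of `H` on `M` as a linear map `H ⊗ M → M`. -/
def actM (M : Type) [AddCommGroup M] [Module k M] [Module H M]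
    [IsScalarTower k H M] [SMulCommClass k H M] : H ⊗[k] M →ₗ[k] M :=
  TensorProduct.lift (smulL k H M)

/-- The diagonal action on a tensor product, built from two `k`-bilinear actions
via comultiplication: `h ↦ (x ⊗ y ↦ α(h₍₁₎)(x) ⊗ β(h₍₂₎)(y))`. -/
def diagAct {X Y : Type} [AddCommGroup X] [Module k X] [AddCommGroup Y] [Module k Y]
    (α : H →ₗ[k] X →ₗ[k] X) (β : H →ₗ[k] Y →ₗ[k] Y) :
    H →ₗ[k] (X ⊗[k] Y →ₗ[k] X ⊗[k] Y) :=
  (TensorProduct.homTensorHomMap (RingHom.id k) X Y X Y) ∘ₗ (TensorProduct.map α β) ∘ₗ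
    (Coalgebra.comul (R := k) (A := H))

/-- Given `f : H ⊗ M → M ⊗ H` and `s : H → H`, the map
`h ⊗ m ↦ f(h₍₂₎ ⊗ m)₍M₎ ⊗ f(h₍₂₎ ⊗ m)₍H₎ * s(h₍₁₎)`
(in Sweedler notation, e.g. `(h₍₂₎m)₍₀₎ ⊗ (h₍₂₎m)₍₁₎ s(h₍₁₎)` when `f = ρ ∘ act`). -/
def twistR {M : Type} [AddCommGroup M] [Module k M]
    (f : H ⊗[k] M →ₗ[k] M ⊗[k] H) (s : H →ₗ[k] H) : H ⊗[k] M →ₗ[k] M ⊗[k] H :=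
  (LinearMap.lTensor M (LinearMap.mul' k H)) ∘ₗ
  (TensorProduct.assoc k M H H).toLinearMap ∘ₗ
  (TensorProduct.comm k H (M ⊗[k] H)).toLinearMap ∘ₗ
  (TensorProduct.map s f) ∘ₗ
  (TensorProduct.assoc k H H M).toLinearMap ∘ₗ
  (LinearMap.rTensor M (Coalgebra.comul (R := k) (A := H)))

/-- The map `h ⊗ m ↦ h₍₁₎·m₍₀₎ ⊗ h₍₂₎·m₍₁₎`. -/
def ydR {M : Type} [AddCommGroup M] [Module k M]
    (act : H ⊗[k] M →ₗ[k] M) (ρ : M →ₗ[k] M ⊗[k] H) : H ⊗[k] M →ₗ[k] M ⊗[k] H :=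
  (TensorProduct.map act (LinearMap.mul' k H)) ∘ₗ
  (TensorProduct.tensorTensorTensorComm k H H M H).toLinearMap ∘ₗ
  (TensorProduct.map (Coalgebra.comul (R := k) (A := H)) ρ)

/-- The map `Φ : V ⊗ M → M ⊗ V`, `v ⊗ m ↦ m₍₀₎ ⊗ m₍₁₎·v`. -/
def PhiMap {M V : Type} [AddCommGroup M] [Module k M] [AddCommGroup V] [Module k V]
    (ρ : M →ₗ[k] M ⊗[k] H) (actV : H ⊗[k] V →ₗ[k] V) : V ⊗[k] M →ₗ[k] M ⊗[k] V :=
  (LinearMap.lTensor M actV) ∘ₗ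
  (TensorProduct.assoc k M H V).toLinearMap ∘ₗ
  (LinearMap.rTensor V ρ) ∘ₗ
  (TensorProduct.comm k V M).toLinearMap

/-- The map `m ↦ s(m₍₁₎)·m₍₀₎`. -/
def stabMap {M : Type} [AddCommGroup M] [Module k M] [Module H M]
    [IsScalarTower k H M] [SMulCommClass k H M]
    (ρ : M →ₗ[k] M ⊗[k] H) (s : H →ₗ[k] H) : M →ₗ[k] M :=
  (actM k H M) ∘ₗ (LinearMap.rTensor M s) ∘ₗ (TensorProduct.comm k M H).toLinearMap ∘ₗ ρ

/-- The map `M ⊗ V → M ⊗ V`, `m ⊗ v ↦ m₍₀₎ ⊗ s(m₍₁₎)·v`. -/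
def tauZero {M V : Type} [AddCommGroup M] [Module k M] [AddCommGroup V] [Module k V]
    (ρ : M →ₗ[k] M ⊗[k] H) (actV : H ⊗[k] V →ₗ[k] V) (s : H →ₗ[k] H) :
    M ⊗[k] V →ₗ[k] M ⊗[k] V :=
  (LinearMap.lTensor M (actV ∘ₗ LinearMap.rTensor V s)) ∘ₗ
  (TensorProduct.assoc k M H V).toLinearMap ∘ₗ
  (LinearMap.rTensor V ρ)

end

/-!
An element `x` of `X ⊗ Y` is invariant under the diagonal action as soon as it satisfies
`(1 ⊗ g)x = (S g ⊗ 1)x` for all `g`, and conversely (using `Σ S(g₁)g₂ ⊗ g₃ = 1 ⊗ g`) every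
invariant satisfies it; only the action on `X` has to be multiplicative. For `B^# ⊗ A`, with
`S⁻²` multiplicative, the flipped condition reads `(g ⊗ 1)x = (1 ⊗ S⁻¹ g)x` on `A ⊗ B`, which is
the condition for `A ⊗ B` after substituting `g ↦ S g`.
-/

namespace DiagonalInvariants

open TensorProduct LinearMap Coalgebra HopfAlgebra

variable {k : Type} [Field k] {H : Type} [Ring H] [HopfAlgebra k H]

lemma sum_counit_right_smul {g : H} {ι : Type*} (r : Repr k g ι) :
    ∑ i ∈ r.index, counit (R := k) (r.right i) • r.left i = g := by
  simpa only [map_sum, rid_tmul, one_smul] using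
    congr(TensorProduct.rid k H $(sum_tmul_counit_eq r))

lemma sum_antipode_tmul_one_mul_comul {g : H} {ι : Type*} (r : Repr k g ι) :
    ∑ i ∈ r.index, (antipode k (r.left i) ⊗ₜ[k] (1 : H)) * comul (r.right i) = 1 ⊗ₜ[k] g := by
  let F : H ⊗[k] (H ⊗[k] H) →ₗ[k] H ⊗[k] H := mul' k (H ⊗[k] H) ∘ₗ
    rTensor (H ⊗[k] H) ((Algebra.TensorProduct.includeLeft (S := k)).toLinearMap ∘ₗ antipode k)
  have hF (t : (H ⊗[k] H) ⊗[k] H) :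
      F (TensorProduct.assoc k H H H t) = rTensor H (mul' k H ∘ₗ rTensor H (antipode k)) t := by
    induction t using TensorProduct.induction_on with
    | zero => simp
    | tmul ab c =>
      induction ab using TensorProduct.induction_on with
      | zero => simp
      | tmul a b => simp [F]
      | add s t hs ht => simp_all [add_tmul]
    | add s t hs ht => simp_all
  calc ∑ i ∈ r.index, (antipode k (r.left i) ⊗ₜ[k] (1 : H)) * comul (r.right i)
      = F (lTensor H comul (∑ i ∈ r.index, r.left i ⊗ₜ[k] r.right i)) := by simp [F, map_sum]
    _ = F (TensorProduct.assoc k H H H (rTensor H comul (comul g))) := by rw [r.eq, coassoc_apply]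
    _ = rTensor H (Algebra.linearMap k H ∘ₗ counit) (comul g) := by
      rw [hF, ← rTensor_comp_apply, comp_assoc, mul_antipode_rTensor_comul]
    _ = 1 ⊗ₜ[k] g := by simp [rTensor_comp_apply]

variable {X Y : Type} [AddCommGroup X] [Module k X] [AddCommGroup Y] [Module k Y]

def pairAct (α : H →ₗ[k] X →ₗ[k] X) (β : H →ₗ[k] Y →ₗ[k] Y) :
    H ⊗[k] H →ₗ[k] Module.End k (X ⊗[k] Y) :=
  homTensorHomMap (RingHom.id k) X Y X Y ∘ₗ map α β

variable (α : H →ₗ[k] X →ₗ[k] X) (β : H →ₗ[k] Y →ₗ[k] Y)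

@[simp]
lemma pairAct_tmul (a b : H) : pairAct α β (a ⊗ₜ b) = map (α a) (β b) := rfl

lemma diagAct_eq_pairAct_comul (h : H) : diagAct k H α β h = pairAct α β (comul h) := rfl

lemma pairAct_tmul_one_mul (hα_mul : ∀ a b, α (a * b) = α a ∘ₗ α b) (a : H) (t : H ⊗[k] H) :
    pairAct α β ((a ⊗ₜ 1) * t) = rTensor Y (α a) ∘ₗ pairAct α β t := by
  induction t using TensorProduct.induction_on with
  | zero => simp
  | tmul b c => simp [hα_mul]
  | add s t hs ht => simp [mul_add, hs, ht, comp_add]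

theorem diagAct_invariant_iff (hα_one : α 1 = LinearMap.id)
    (hα_mul : ∀ a b, α (a * b) = α a ∘ₗ α b) (x : X ⊗[k] Y) :
    (∀ h : H, diagAct k H α β h x = counit (R := k) h • x) ↔
      ∀ g : H, lTensor X (β g) x = rTensor Y (α (antipode k g)) x := by
  constructor
  · intro hx g
    let r := ℛ k g
    calc lTensor X (β g) x = pairAct α β (1 ⊗ₜ g) x := by rw [pairAct_tmul, hα_one]; rfl
      _ = ∑ i ∈ r.index,
            rTensor Y (α (antipode k (r.left i))) (diagAct k H α β (r.right i) x) := by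
        simp [← sum_antipode_tmul_one_mul_comul r, map_sum, pairAct_tmul_one_mul α β hα_mul,
          diagAct_eq_pairAct_comul]
      _ = rTensor Y
            (α (antipode k (∑ i ∈ r.index, counit (R := k) (r.right i) • r.left i))) x := by
        simp only [hx, map_smul, map_sum, ← coe_rTensorHom, LinearMap.sum_apply,
          LinearMap.smul_apply]
      _ = rTensor Y (α (antipode k g)) x := by rw [sum_counit_right_smul]
  · intro hx h
    let r := ℛ k h
    calc diagAct k H α β h x
        = ∑ i ∈ r.index, rTensor Y (α (r.left i * antipode k (r.right i))) x := by
          rw [diagAct_eq_pairAct_comul, ← r.eq, map_sum, LinearMap.sum_apply]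
          refine Finset.sum_congr rfl fun i _ => ?_
          rw [pairAct_tmul, ← rTensor_comp_lTensor, comp_apply, hx, hα_mul, rTensor_comp,
            comp_apply]
      _ = rTensor Y (α (∑ i ∈ r.index, r.left i * antipode k (r.right i))) x := by
          simp only [map_sum, ← coe_rTensorHom, LinearMap.sum_apply]
      _ = counit (R := k) h • x := by
          rw [sum_mul_antipode_eq_smul, map_smul, hα_one, rTensor_smul, rTensor_id]
          rfl

section smulL

variable (M : Type) [AddCommGroup M] [Module k M] [Module H M] [IsScalarTower k H M]
  [SMulCommClass k H M]

lemma smulL_one : smulL k H M 1 = LinearMap.id := LinearMap.ext (one_smul H)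

lemma smulL_mul (a b : H) : smulL k H M (a * b) = smulL k H M a ∘ₗ smulL k H M b :=
  LinearMap.ext (mul_smul a b)

end smulL

lemma _root_.LinearEquiv.zpow_neg_two_apply {R M : Type*} [Semiring R] [AddCommMonoid M]
    [Module R M] (e : M ≃ₗ[R] M) (m : M) : (e ^ (-2 : ℤ)) m = e.symm (e.symm m) := by
  rw [zpow_neg, zpow_ofNat, ← inv_pow, pow_two]
  rfl

section antipodeEquiv

variable {S : H ≃ₗ[k] H}

lemma symm_mul_antidistrib_of_eq_antipode (hS : ∀ h : H, S h = antipode k h) (a b : H) :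
    S.symm (a * b) = S.symm b * S.symm a :=
  S.injective (by
    rw [S.apply_symm_apply, hS (_ * _), antipode_mul_antidistrib, ← hS, ← hS, S.apply_symm_apply,
      S.apply_symm_apply])

lemma symm_one_of_eq_antipode (hS : ∀ h : H, S h = antipode k h) : S.symm 1 = 1 :=
  S.injective (by rw [S.apply_symm_apply, hS, antipode_one])

lemma zpow_neg_two_one_of_eq_antipode (hS : ∀ h : H, S h = antipode k h) :
    (S ^ (-2 : ℤ)) 1 = 1 := by
  rw [LinearEquiv.zpow_neg_two_apply, symm_one_of_eq_antipode hS, symm_one_of_eq_antipode hS]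

lemma zpow_neg_two_mul_of_eq_antipode (hS : ∀ h : H, S h = antipode k h) (a b : H) :
    (S ^ (-2 : ℤ)) (a * b) = (S ^ (-2 : ℤ)) a * (S ^ (-2 : ℤ)) b := by
  simp only [LinearEquiv.zpow_neg_two_apply, symm_mul_antidistrib_of_eq_antipode hS]

end antipodeEquiv

end DiagonalInvariants

open DiagonalInvariants in
/-- the flip `x ⊗ y ↦ y ⊗ x` is a bijection between `(A ⊗ B)^H` and
`(B^# ⊗ A)^H`, where `B^#` carries the action twisted by `S^{-2}`. -/
theorem statement4
    (k : Type) [Field k] (H : Type) [Ring H] [HopfAlgebra k H]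
    (S : H ≃ₗ[k] H) (hS : ∀ h : H, S h = HopfAlgebra.antipode (R := k) h)
    (A : Type) [AddCommGroup A] [Module k A] [Module H A]
    [IsScalarTower k H A] [SMulCommClass k H A]
    (B : Type) [AddCommGroup B] [Module k B] [Module H B]
    [IsScalarTower k H B] [SMulCommClass k H B]
    (x : A ⊗[k] B) :
    (∀ h : H, diagAct k H (smulL k H A) (smulL k H B) h x = Coalgebra.counit (R := k) h • x) ↔
    (∀ h : H,
        diagAct k H ((smulL k H B) ∘ₗ (S ^ (-2 : ℤ)).toLinearMap) (smulL k H A) h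
            ((TensorProduct.comm k A B) x) =
          Coalgebra.counit (R := k) h • ((TensorProduct.comm k A B) x)) := by
  have twisted_one : (smulL k H B ∘ₗ (S ^ (-2 : ℤ)).toLinearMap) 1 = LinearMap.id := by
    rw [LinearMap.comp_apply, LinearEquiv.coe_coe, zpow_neg_two_one_of_eq_antipode hS, smulL_one]
  have twisted_mul (a b : H) : (smulL k H B ∘ₗ (S ^ (-2 : ℤ)).toLinearMap) (a * b) =
      (smulL k H B ∘ₗ (S ^ (-2 : ℤ)).toLinearMap) a ∘ₗ
        (smulL k H B ∘ₗ (S ^ (-2 : ℤ)).toLinearMap) b := by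
    simp only [LinearMap.comp_apply, LinearEquiv.coe_coe, zpow_neg_two_mul_of_eq_antipode hS,
      smulL_mul]
  rw [diagAct_invariant_iff _ _ (smulL_one A) (smulL_mul A),
    diagAct_invariant_iff _ _ twisted_one twisted_mul]
  -- `S⁻² ∘ S = S⁻¹`, so after the flip the right side reads `(g ⊗ 1)x = (1 ⊗ S⁻¹ g)x`
  simp only [LinearMap.lTensor_comm, LinearMap.rTensor_comm,
    (TensorProduct.comm k A B).injective.eq_iff, LinearMap.comp_apply, LinearEquiv.coe_coe,
    LinearEquiv.zpow_neg_two_apply, ← hS, S.symm_apply_apply]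
  conv_rhs => rw [← S.toEquiv.forall_congr_right]
  simp only [LinearEquiv.coe_toEquiv, S.symm_apply_apply]
  exact forall_congr' fun g => eq_comm
end

section
/- Let H be a Hopf algebra over a field k, M a left H-module and right H-comodule satisfying the stability condition m₍₁₎·m₍₀₎ = m for all m ∈ M, and V a left H-module. Then for every H-module map f : M ⊗ V → k (with diagonal action on M ⊗ V and trivial action on k), one has f(m₍₀₎ ⊗ S(m₍₁₎)v) = f(m ⊗ v) for all m ∈ M, v ∈ V. -/
open TensorProduct

/-! Moving `h` across the tensor sign turns it into its antipode: `h ⊗ 1 = h₍₁₎ ⊗ h₍₂₎S(h₍₃₎)`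
is `Δ(h₍₁₎)·(1 ⊗ S(h₍₂₎))` by coassociativity, and an `H`-linear `f` replaces the factor
`Δ(h₍₁₎)` by `ε(h₍₁₎)`, so `f(h·m ⊗ v) = f(m ⊗ S(h)·v)`. Applied to `m₍₀₎ ⊗ S(m₍₁₎)·v` this gives
`f(m₍₁₎·m₍₀₎ ⊗ v)`, which is `f(m ⊗ v)` by stability. -/

open Coalgebra HopfAlgebra

namespace HopfAlgebra
variable {R A W : Type*} [CommSemiring R] [Semiring A] [HopfAlgebra R A]
  [AddCommMonoid W] [Module R W]

theorem lTensor_mul_lTensor_antipode_assoc_rTensor_comul (a : A) :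
    (LinearMap.mul' R A ∘ₗ (antipode R).lTensor A).lTensor A
      (TensorProduct.assoc R A A A ((comul (R := R)).rTensor A (comul a))) = a ⊗ₜ 1 := by
  rw [coassoc_apply, ← LinearMap.lTensor_comp_apply, LinearMap.comp_assoc,
    mul_antipode_lTensor_comul, LinearMap.lTensor_comp_apply, lTensor_counit_comul]
  simp

theorem apply_tmul_one_eq_apply_one_tmul_antipode (T : A ⊗[R] A →ₗ[R] W)
    (hT : ∀ a c : A, T (comul (R := R) a * (1 ⊗ₜ c)) = counit (R := R) a • T (1 ⊗ₜ c)) (a : A) :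
    T (a ⊗ₜ 1) = T (1 ⊗ₜ antipode R a) := by
  set g : A →ₗ[R] W := T ∘ₗ TensorProduct.mk R A A 1 ∘ₗ antipode R
  have key : T ∘ₗ (LinearMap.mul' R A ∘ₗ (antipode R).lTensor A).lTensor A ∘ₗ
      (TensorProduct.assoc R A A A).toLinearMap ∘ₗ (comul (R := R)).rTensor A =
      g ∘ₗ TensorProduct.lift (LinearMap.lsmul R A ∘ₗ counit) := by
    ext x y
    have hassoc : ∀ t : A ⊗[R] A, (LinearMap.mul' R A ∘ₗ (antipode R).lTensor A).lTensor A
        (TensorProduct.assoc R A A A (t ⊗ₜ y)) = t * (1 ⊗ₜ antipode R y) := by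
      intro t
      induction t using TensorProduct.induction_on with
      | zero => simp
      | tmul b c => simp
      | add s t hs ht => simp only [add_tmul, map_add, hs, ht, add_mul]
    simp [hassoc, hT, g]
  calc T (a ⊗ₜ 1)
      = g (TensorProduct.lift (LinearMap.lsmul R A ∘ₗ counit) (comul a)) := by
        rw [← lTensor_mul_lTensor_antipode_assoc_rTensor_comul a]
        exact LinearMap.congr_fun key (comul a)
    _ = T (1 ⊗ₜ antipode R a) := by
        rw [← LinearMap.comp_apply (TensorProduct.lift _), lift_lsmul_comp_counit_comp_comul]
        rfl

end HopfAlgebra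

section HopfModule

variable {k H : Type} [Field k] [Ring H] [HopfAlgebra k H]
variable {M V : Type} [AddCommGroup M] [Module k M] [Module H M]
  [IsScalarTower k H M] [SMulCommClass k H M]
  [AddCommGroup V] [Module k V] [Module H V] [IsScalarTower k H V] [SMulCommClass k H V]

@[simp]
theorem smulL_apply (h : H) (m : M) : smulL k H M h m = h • m := rfl

@[simp]
theorem actM_tmul (h : H) (m : M) : actM k H M (h ⊗ₜ m) = h • m := rfl

theorem diagAct_apply_tmul (h : H) (m : M) (v : V) :
    diagAct k H (smulL k H M) (smulL k H V) h (m ⊗ₜ v) =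
      TensorProduct.map ((smulL k H M).flip m) ((smulL k H V).flip v) (comul (R := k) h) := by
  simp only [diagAct, LinearMap.comp_apply]
  induction comul (R := k) h using TensorProduct.induction_on with
  | zero => simp
  | tmul a b => simp
  | add s t hs ht => simp only [map_add, LinearMap.add_apply, hs, ht]

theorem apply_smul_tmul_eq_apply_tmul_antipode_smul {W : Type} [AddCommGroup W] [Module k W]
    (f : M ⊗[k] V →ₗ[k] W)
    (hf : ∀ (h : H) (x : M ⊗[k] V),
      f (diagAct k H (smulL k H M) (smulL k H V) h x) = counit (R := k) h • f x)
    (h : H) (m : M) (v : V) :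
    f ((h • m) ⊗ₜ v) = f (m ⊗ₜ (antipode k h • v)) := by
  set T := f ∘ₗ TensorProduct.map ((smulL k H M).flip m) ((smulL k H V).flip v)
  have hT : ∀ a c : H,
      T (comul (R := k) a * (1 ⊗ₜ c)) = counit (R := k) a • T (1 ⊗ₜ c) := by
    intro a c
    have hmap : TensorProduct.map ((smulL k H M).flip m) ((smulL k H V).flip v)
        (comul (R := k) a * (1 ⊗ₜ c)) =
          diagAct k H (smulL k H M) (smulL k H V) a (m ⊗ₜ (c • v)) := by
      rw [diagAct_apply_tmul]
      induction comul (R := k) a using TensorProduct.induction_on with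
      | zero => simp
      | tmul x y => simp [mul_smul]
      | add s t hs ht => simp only [add_mul, map_add, hs, ht]
    simp [T, hmap, hf]
  simpa [T] using HopfAlgebra.apply_tmul_one_eq_apply_one_tmul_antipode T hT h

theorem apply_tauZero_tmul {W : Type} [AddCommGroup W] [Module k W]
    (f : M ⊗[k] V →ₗ[k] W)
    (hf : ∀ (h : H) (x : M ⊗[k] V),
      f (diagAct k H (smulL k H M) (smulL k H V) h x) = counit (R := k) h • f x)
    (ρ : M →ₗ[k] M ⊗[k] H) (m : M) (v : V) :
    f (tauZero k H ρ (actM k H V) (antipode k) (m ⊗ₜ v)) =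
      f (stabMap k H ρ LinearMap.id m ⊗ₜ v) := by
  simp only [tauZero, stabMap, LinearMap.comp_apply, LinearEquiv.coe_coe, LinearMap.rTensor_tmul]
  induction ρ m using TensorProduct.induction_on with
  | zero => simp
  | tmul n h => simp [apply_smul_tmul_eq_apply_tmul_antipode_smul f hf]
  | add s t hs ht => simp only [map_add, add_tmul, hs, ht]

end HopfModule

/-- if `M` is stable (`m₍₁₎m₍₀₎ = m`) then any `H`-linear `f : M ⊗ V → k`
satisfies `f(m₍₀₎ ⊗ S(m₍₁₎)v) = f(m ⊗ v)`. -/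
theorem statement7
    (k : Type) [Field k] (H : Type) [Ring H] [HopfAlgebra k H]
    (M : Type) [AddCommGroup M] [Module k M] [Module H M]
    [IsScalarTower k H M] [SMulCommClass k H M]
    (ρ : M →ₗ[k] M ⊗[k] H)
    (hstab : ∀ m : M, stabMap k H ρ LinearMap.id m = m)
    (V : Type) [AddCommGroup V] [Module k V] [Module H V]
    [IsScalarTower k H V] [SMulCommClass k H V]
    (f : M ⊗[k] V →ₗ[k] k)
    (hf : ∀ (h : H) (x : M ⊗[k] V),
      f (diagAct k H (smulL k H M) (smulL k H V) h x) = Coalgebra.counit (R := k) h • f x) :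
    ∀ (m : M) (v : V),
      f (tauZero k H ρ (actM k H V) (HopfAlgebra.antipode (R := k)) (m ⊗ₜ[k] v)) =
        f (m ⊗ₜ[k] v) := by
  intro m v
  rw [apply_tauZero_tmul f hf, hstab]
end

section
/- Let C be a monoidal category and F : C → Vec a symmetric 2-trace, i.e. F is equipped with natural isomorphisms ι_c : F(- ⊗ c) ≅ F(c ⊗ -) satisfying ι_c(1) = F(right-unitor composed with inverse left-unitor : 1 ⊗ c ≅ c ⊗ 1). Then for all objects c, c' of C, the composite ι_c(c') ∘ ι_{c'}(c) : F(c ⊗ c') → F(c ⊗ c') is the identity. -/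
open CategoryTheory MonoidalCategory

/-- A symmetric 2-trace on a monoidal category `C`: a functor `F : C ⥤ Vec` together with
isomorphisms `ι c x : F(x ⊗ c) ≅ F(c ⊗ x)`, natural in both variables, compatible with the
tensor product (centrality of `F` in `Fun(C, Vec)`), and symmetric:
`ι c 𝟙 = F(1 ⊗ c ≅ c ⊗ 1)`. -/
structure IsSymmTwoTrace {k : Type} [Field k] {C : Type*} [Category C] [MonoidalCategory C]
    (F : C ⥤ ModuleCat k) (ι : ∀ c x : C, F.obj (x ⊗ c) ≅ F.obj (c ⊗ x)) : Prop where
  nat_x : ∀ (c : C) {x y : C} (f : x ⟶ y),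
    F.map (f ▷ c) ≫ (ι c y).hom = (ι c x).hom ≫ F.map (c ◁ f)
  nat_c : ∀ {c d : C} (g : c ⟶ d) (x : C),
    F.map (x ◁ g) ≫ (ι d x).hom = (ι c x).hom ≫ F.map (g ▷ x)
  mul : ∀ c c' x : C,
    (ι (c ⊗ c') x).hom =
      F.map (α_ x c c').inv ≫ (ι c' (x ⊗ c)).hom ≫ F.map (α_ c' x c).inv ≫
        (ι c (c' ⊗ x)).hom ≫ F.map (α_ c c' x).inv
  sym : ∀ c : C, (ι c (𝟙_ C)).hom = F.map ((λ_ c).hom ≫ (ρ_ c).inv)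

/-!
Centrality of `ι` at `x = 𝟙_ C`, after naturality in `x` removes the unit from
`ι c' (𝟙_ C ⊗ c)` and `ι c (c' ⊗ 𝟙_ C)` and the triangle identities absorb the associators,
says that `ι_c(c') ∘ ι_{c'}(c)` is `ι_{c ⊗ c'}(𝟙)` conjugated by unitors. Symmetry makes
`ι_{c ⊗ c'}(𝟙)` itself the unitor isomorphism `𝟙 ⊗ (c ⊗ c') ≅ (c ⊗ c') ⊗ 𝟙`, so the
conjugate is the identity.
-/

namespace IsSymmTwoTrace

variable {k : Type} [Field k] {C : Type*} [Category C] [MonoidalCategory C]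
  {F : C ⥤ ModuleCat k} {ι : ∀ c x : C, F.obj (x ⊗ c) ≅ F.obj (c ⊗ x)}

theorem hom_eq_conj_of_iso (hF : IsSymmTwoTrace F ι) (c : C) {x y : C} (e : x ≅ y) :
    (ι c x).hom = F.map (e.hom ▷ c) ≫ (ι c y).hom ≫ F.map (c ◁ e.inv) := by
  rw [reassoc_of% hF.nat_x c e.hom, ← F.map_comp, ← whiskerLeft_comp, e.hom_inv_id,
    whiskerLeft_id, F.map_id, Category.comp_id]

theorem hom_comp_hom_eq_conj_unit (hF : IsSymmTwoTrace F ι) (c c' : C) :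
    (ι c' c).hom ≫ (ι c c').hom =
      F.map (λ_ (c ⊗ c')).inv ≫ (ι (c ⊗ c') (𝟙_ C)).hom ≫ F.map (ρ_ (c ⊗ c')).hom := by
  have left : F.map (α_ (𝟙_ C) c c').inv ≫ F.map ((λ_ c).hom ▷ c') =
      F.map (λ_ (c ⊗ c')).hom := by
    rw [← F.map_comp, leftUnitor_tensor_hom]
  have middle : F.map (c' ◁ (λ_ c).inv) ≫ F.map (α_ c' (𝟙_ C) c).inv ≫
      F.map ((ρ_ c').hom ▷ c) = 𝟙 _ := by
    rw [← F.map_comp, ← F.map_comp, ← F.map_id]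
    congr 1
    monoidal
  have right : F.map (c ◁ (ρ_ c').inv) ≫ F.map (α_ c c' (𝟙_ C)).inv =
      F.map (ρ_ (c ⊗ c')).inv := by
    rw [← F.map_comp, rightUnitor_tensor_inv]
  rw [hF.mul, hF.hom_eq_conj_of_iso c' (λ_ c), hF.hom_eq_conj_of_iso c (ρ_ c')]
  simp only [Category.assoc]
  rw [reassoc_of% left, reassoc_of% middle, reassoc_of% right]
  simp

end IsSymmTwoTrace

/-- for a symmetric 2-trace `(F, ι)`, the composite
`ι_c(c') ∘ ι_{c'}(c) : F(c ⊗ c') → F(c ⊗ c')` is the identity. -/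
theorem statement11
    (k : Type) [Field k] (C : Type*) [Category C] [MonoidalCategory C]
    (F : C ⥤ ModuleCat k) (ι : ∀ c x : C, F.obj (x ⊗ c) ≅ F.obj (c ⊗ x))
    (hF : IsSymmTwoTrace F ι) :
    ∀ c c' : C, (ι c' c).hom ≫ (ι c c').hom = 𝟙 (F.obj (c ⊗ c')) := by
  intro c c'
  rw [hF.hom_comp_hom_eq_conj_unit, hF.sym]
  simp
end
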